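/- arXiv:2407.03072 — 5 statements merged into one kernel-verified Lean document; each statement's English description precedes it below -/
import Mathlib

section
/- Let x̂ be the minimizer of f(x) = (1/2)x^T H x + c^T x over the affine subspace x_0 + S, where S is spanned by nonzero mutually H-conjugate vectors q_0,...,q_{k-1}. For any x ∈ x_0 + S, the unique vector p ∈ S with x + p = x̂ is p = Σ_{i=0}^{k-1} β_i q_i with β_i = -(g(x)^T q_i)/(q_i^T H q_i), where g(x) = H x + c. -/
open Matrix

/-!
Along any direction `d ∈ S` the objective restricts to the parabola
`t ↦ f x̂ + t (g(x̂) ⬝ d) + t² (d ⬝ H d) / 2`, which is minimal at `t = 0`; hence `g(x̂) ⊥ S`.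
Since `g(x̂) - g(x) = H (x̂ - x)`, this gives `q_i ⬝ H (x̂ - x) = -(g(x) ⬝ q_i)`, and the
`H`-conjugacy of the `q_i` makes `q_i ⬝ H v / q_i ⬝ H q_i` the `i`-th coefficient of any
`v ∈ span q`, in particular of `v = x̂ - x`.
-/

theorem eq_zero_of_forall_nonneg_mul_add_sq_mul {a b : ℝ} (h : ∀ t : ℝ, 0 ≤ t * b + t ^ 2 * a) :
    b = 0 := by
  have hmin : IsLocalMin (fun t : ℝ => t * b + t ^ 2 * a) 0 :=
    Filter.Eventually.of_forall fun t => by simpa using h t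
  have hderiv : HasDerivAt (fun t : ℝ => t * b + t ^ 2 * a) b 0 := by
    simpa using ((hasDerivAt_id' (0 : ℝ)).mul_const b).fun_add
      (((hasDerivAt_id' (0 : ℝ)).fun_pow 2).mul_const a)
  exact hmin.hasDerivAt_eq_zero hderiv

namespace Matrix

variable {m ι R : Type*} [Fintype m] [Fintype ι]

theorem IsSymm.dotProduct_mulVec_comm [CommSemiring R] {H : Matrix m m R} (hH : H.IsSymm)
    (u v : m → R) : u ⬝ᵥ H *ᵥ v = v ⬝ᵥ H *ᵥ u := by
  rw [dotProduct_mulVec, ← mulVec_transpose, hH.eq, dotProduct_comm]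

theorem IsSymm.quadratic_add_smul {H : Matrix m m ℝ} (hH : H.IsSymm) (c x d : m → ℝ) (t : ℝ) :
    (1 / 2) * ((x + t • d) ⬝ᵥ H *ᵥ (x + t • d)) + c ⬝ᵥ (x + t • d) =
      (1 / 2) * (x ⬝ᵥ H *ᵥ x) + c ⬝ᵥ x + t * ((H *ᵥ x + c) ⬝ᵥ d) +
        t ^ 2 / 2 * (d ⬝ᵥ H *ᵥ d) := by
  have hcross : d ⬝ᵥ H *ᵥ x = H *ᵥ x ⬝ᵥ d := dotProduct_comm _ _
  simp only [mulVec_add, mulVec_smul, dotProduct_add, add_dotProduct, dotProduct_smul,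
    smul_dotProduct, smul_eq_mul, hH.dotProduct_mulVec_comm x d, hcross, dotProduct_comm c d]
  ring

theorem IsSymm.dotProduct_gradient_eq_zero {H : Matrix m m ℝ} (hH : H.IsSymm) {c x d : m → ℝ}
    (hmin : ∀ t : ℝ, (1 / 2) * (x ⬝ᵥ H *ᵥ x) + c ⬝ᵥ x ≤
      (1 / 2) * ((x + t • d) ⬝ᵥ H *ᵥ (x + t • d)) + c ⬝ᵥ (x + t • d)) :
    (H *ᵥ x + c) ⬝ᵥ d = 0 := by
  refine eq_zero_of_forall_nonneg_mul_add_sq_mul (a := (d ⬝ᵥ H *ᵥ d) / 2) fun t => ?_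
  have := hmin t
  rw [hH.quadratic_add_smul] at this
  linarith

theorem dotProduct_mulVec_sum_smul_of_pairwise [CommSemiring R] {H : Matrix m m R}
    {q : ι → m → R} (hconj : Pairwise fun i j => q i ⬝ᵥ H *ᵥ q j = 0) (α : ι → R) (i : ι) :
    q i ⬝ᵥ H *ᵥ ∑ j, α j • q j = α i * (q i ⬝ᵥ H *ᵥ q i) := by
  simp only [mulVec_sum, mulVec_smul, dotProduct_sum, dotProduct_smul, smul_eq_mul]
  exact Finset.sum_eq_single i (fun j _ hji => by rw [hconj hji.symm, mul_zero])
    (fun hi => absurd (Finset.mem_univ i) hi)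

theorem sum_conjugate_coeff_smul_eq [Field R] {H : Matrix m m R} {q : ι → m → R}
    (hconj : Pairwise fun i j => q i ⬝ᵥ H *ᵥ q j = 0) (hq : ∀ i, q i ⬝ᵥ H *ᵥ q i ≠ 0)
    {v : m → R} (hv : v ∈ Submodule.span R (Set.range q)) :
    ∑ i, (q i ⬝ᵥ H *ᵥ v / q i ⬝ᵥ H *ᵥ q i) • q i = v := by
  obtain ⟨α, rfl⟩ := (Submodule.mem_span_range_iff_exists_fun R).mp hv
  simp only [dotProduct_mulVec_sum_smul_of_pairwise hconj, mul_div_cancel_right₀ _ (hq _)]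

end Matrix

theorem subspace_newton_step_formula {n k : ℕ}
    (H : Matrix (Fin n) (Fin n) ℝ) (hH : H.PosDef)
    (c x0 : Fin n → ℝ)
    (q : Fin k → (Fin n → ℝ))
    (hq : ∀ i, q i ≠ 0)
    (hconj : ∀ i j, i ≠ j → q i ⬝ᵥ H.mulVec (q j) = 0)
    (S : Submodule ℝ (Fin n → ℝ)) (hS : S = Submodule.span ℝ (Set.range q))
    (f : (Fin n → ℝ) → ℝ)
    (hf : ∀ x, f x = (1 / 2) * (x ⬝ᵥ H.mulVec x) + c ⬝ᵥ x)
    (xhat : Fin n → ℝ) (hxhatS : xhat - x0 ∈ S)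
    (hxhatmin : ∀ y : Fin n → ℝ, y - x0 ∈ S → f xhat ≤ f y)
    (x : Fin n → ℝ) (hx : x - x0 ∈ S)
    (g : Fin n → ℝ) (hg : g = H.mulVec x + c) (β : Fin k → ℝ)
    (hβ : ∀ i : Fin k, β i = -(g ⬝ᵥ q i) / (q i ⬝ᵥ H.mulVec (q i))) :
    x + ∑ i, β i • q i = xhat := by
  subst hS
  have hsymm : H.IsSymm := isHermitian_iff_isSymm.mp hH.isHermitian
  have hqq : ∀ i, q i ⬝ᵥ H *ᵥ q i ≠ 0 := fun i => by
    simpa using (hH.dotProduct_mulVec_pos (hq i)).ne'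
  have hgrad : ∀ i, (H *ᵥ xhat + c) ⬝ᵥ q i = 0 := fun i =>
    hsymm.dotProduct_gradient_eq_zero fun t => by
      simpa only [hf] using hxhatmin (xhat + t • q i) (by
        rw [add_sub_right_comm]
        exact add_mem hxhatS (Submodule.smul_mem _ t (Submodule.subset_span ⟨i, rfl⟩)))
  have hcoeff : ∀ i, q i ⬝ᵥ H *ᵥ (xhat - x) = -(g ⬝ᵥ q i) := fun i => by
    have := hgrad i
    rw [add_dotProduct] at this
    rw [dotProduct_comm, hg, mulVec_sub, sub_dotProduct, add_dotProduct]
    linarith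
  have hstep : xhat - x ∈ Submodule.span ℝ (Set.range q) := by
    simpa using sub_mem hxhatS hx
  calc x + ∑ i, β i • q i
      = x + ∑ i, (q i ⬝ᵥ H *ᵥ (xhat - x) / q i ⬝ᵥ H *ᵥ q i) • q i := by simp only [hβ, hcoeff]
    _ = xhat := by rw [sum_conjugate_coeff_smul_eq hconj hqq hstep, add_sub_cancel]
end

section
/- Let H be symmetric positive definite and let r be the smallest integer with K_r(g_0,H) = K_{r+1}(g_0,H), where g_0 = H x_0 + c. Then the minimizer of f(x) = (1/2)x^T H x + c^T x over the affine subspace x_0 + K_r(g_0,H) equals the global minimizer x* = -H^{-1}c of f. -/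
/-!
Once the Krylov sequence stalls, `K_r(g₀, H)` is `H`-invariant and contains `g₀`; as `H` is
injective on this finite-dimensional space it is also `H⁻¹`-invariant, so it contains
`H⁻¹ g₀ = x₀ - x*`. Hence `x*` is feasible, and since `f y = f x* + ½ (y - x*)ᵀ H (y - x*)`,
it is the unique point of minimal value.
-/

open Matrix

def krylov {n : ℕ} (b : Fin n → ℝ) (A : Matrix (Fin n) (Fin n) ℝ) (k : ℕ) :
    Submodule ℝ (Fin n → ℝ) :=
  Submodule.span ℝ (Set.range fun i : Fin k => (A ^ (i : ℕ)).mulVec b)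

theorem LinearMap.exists_apply_eq_of_mapsTo {K V : Type*} [Field K] [AddCommGroup V]
    [Module K V] [FiniteDimensional K V] {f : V →ₗ[K] V} (hf : Function.Injective f)
    {S : Submodule K V} (hS : ∀ x ∈ S, f x ∈ S) {y : V} (hy : y ∈ S) : ∃ x ∈ S, f x = y := by
  have hinj : Function.Injective (f.restrict hS) := fun a b hab =>
    Subtype.ext (hf (congrArg Subtype.val hab))
  obtain ⟨x, hx⟩ := LinearMap.injective_iff_surjective.mp hinj ⟨y, hy⟩
  exact ⟨x, x.2, congrArg Subtype.val hx⟩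

theorem Matrix.nonsing_inv_mulVec_mem {ι K : Type*} [Fintype ι] [DecidableEq ι] [Field K]
    {A : Matrix ι ι K} (hA : IsUnit A) {S : Submodule K (ι → K)}
    (hS : ∀ x ∈ S, A *ᵥ x ∈ S) {y : ι → K} (hy : y ∈ S) : A⁻¹ *ᵥ y ∈ S := by
  obtain ⟨x, hx, rfl⟩ :=
    (mulVecLin A).exists_apply_eq_of_mapsTo (mulVec_injective_of_isUnit hA) hS hy
  rwa [mulVecLin_apply, mulVec_mulVec, nonsing_inv_mul A ((isUnit_iff_isUnit_det A).mp hA),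
    one_mulVec]

theorem self_mem_krylov_of_eq {n r : ℕ} {b : Fin n → ℝ} {A : Matrix (Fin n) (Fin n) ℝ}
    (hr : krylov b A r = krylov b A (r + 1)) : b ∈ krylov b A r :=
  hr ▸ Submodule.subset_span ⟨0, by simp⟩

theorem mulVec_mem_krylov_of_eq {n r : ℕ} {b : Fin n → ℝ} {A : Matrix (Fin n) (Fin n) ℝ}
    (hr : krylov b A r = krylov b A (r + 1)) {x : Fin n → ℝ} (hx : x ∈ krylov b A r) :
    A *ᵥ x ∈ krylov b A r := by
  induction hx using Submodule.span_induction with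
  | mem v hv =>
    obtain ⟨i, rfl⟩ := hv
    rw [mulVec_mulVec, ← pow_succ', hr]
    exact Submodule.subset_span ⟨i.succ, rfl⟩
  | zero => simp
  | add a b _ _ ha hb => rw [mulVec_add]; exact add_mem ha hb
  | smul t a _ ha => rw [mulVec_smul]; exact Submodule.smul_mem _ t ha

theorem Matrix.IsSymm.quadratic_eq_of_mulVec_eq_neg {ι : Type*} [Fintype ι]
    {H : Matrix ι ι ℝ} (hH : H.IsSymm) {c x : ι → ℝ} (hx : H *ᵥ x = -c) (y : ι → ℝ) :
    1 / 2 * (y ⬝ᵥ H *ᵥ y) + c ⬝ᵥ y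
      = 1 / 2 * (x ⬝ᵥ H *ᵥ x) + c ⬝ᵥ x + 1 / 2 * ((y - x) ⬝ᵥ H *ᵥ (y - x)) := by
  have hcross : x ⬝ᵥ H *ᵥ y = y ⬝ᵥ H *ᵥ x := by
    rw [dotProduct_mulVec, ← mulVec_transpose, hH.eq, dotProduct_comm]
  simp only [mulVec_sub, sub_dotProduct, dotProduct_sub, hcross, hx, dotProduct_neg,
    dotProduct_comm _ c]
  ring

theorem Matrix.PosDef.quadratic_lt_of_mulVec_eq_neg {ι : Type*} [Fintype ι]
    {H : Matrix ι ι ℝ} (hH : H.PosDef) {c x y : ι → ℝ} (hx : H *ᵥ x = -c) (hy : y ≠ x) :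
    1 / 2 * (x ⬝ᵥ H *ᵥ x) + c ⬝ᵥ x < 1 / 2 * (y ⬝ᵥ H *ᵥ y) + c ⬝ᵥ y := by
  have hpos : 0 < (y - x) ⬝ᵥ H *ᵥ (y - x) := hH.dotProduct_mulVec_pos (sub_ne_zero.mpr hy)
  rw [(isHermitian_iff_isSymm.mp hH.isHermitian).quadratic_eq_of_mulVec_eq_neg hx y]
  linarith

theorem krylov_minimizer_is_global_general {n : ℕ}
    (H : Matrix (Fin n) (Fin n) ℝ) (hH : H.PosDef)
    (c x0 : Fin n → ℝ) (g0 : Fin n → ℝ) (hg0 : g0 = H.mulVec x0 + c)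
    (r : ℕ) (hr : krylov g0 H r = krylov g0 H (r + 1))
    (f : (Fin n → ℝ) → ℝ)
    (hf : ∀ x, f x = (1 / 2) * (x ⬝ᵥ H.mulVec x) + c ⬝ᵥ x)
    (xhat : Fin n → ℝ)
    (hxhatmin : ∀ y : Fin n → ℝ, y - x0 ∈ krylov g0 H r → f xhat ≤ f y) :
    xhat = -(H⁻¹.mulVec c) := by
  have hdet : IsUnit H.det := (isUnit_iff_isUnit_det H).mp hH.isUnit
  have hinv : H⁻¹ * H = 1 := nonsing_inv_mul H hdet
  have hstar : H *ᵥ -(H⁻¹ *ᵥ c) = -c := by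
    rw [mulVec_neg, mulVec_mulVec, mul_nonsing_inv H hdet, one_mulVec]
  have hstar_mem : -(H⁻¹ *ᵥ c) - x0 ∈ krylov g0 H r := by
    have heq : -(H⁻¹ *ᵥ c) - x0 = -(H⁻¹ *ᵥ g0) := by
      rw [hg0, mulVec_add, mulVec_mulVec, hinv, one_mulVec]
      abel
    rw [heq]
    exact neg_mem (nonsing_inv_mulVec_mem hH.isUnit (fun x => mulVec_mem_krylov_of_eq hr)
      (self_mem_krylov_of_eq hr))
  by_contra hne
  have hlt := hH.quadratic_lt_of_mulVec_eq_neg hstar hne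
  have hle := hxhatmin _ hstar_mem
  rw [hf, hf] at hle
  linarith

theorem krylov_minimizer_is_global {n : ℕ}
    (H : Matrix (Fin n) (Fin n) ℝ) (hH : H.PosDef)
    (c x0 : Fin n → ℝ) (g0 : Fin n → ℝ) (hg0 : g0 = H.mulVec x0 + c)
    (r : ℕ) (hr : krylov g0 H r = krylov g0 H (r + 1))
    (hrmin : ∀ s : ℕ, s < r → krylov g0 H s ≠ krylov g0 H (s + 1))
    (f : (Fin n → ℝ) → ℝ)
    (hf : ∀ x, f x = (1 / 2) * (x ⬝ᵥ H.mulVec x) + c ⬝ᵥ x)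
    (xhat : Fin n → ℝ) (hxhatS : xhat - x0 ∈ krylov g0 H r)
    (hxhatmin : ∀ y : Fin n → ℝ, y - x0 ∈ krylov g0 H r → f xhat ≤ f y) :
    xhat = -(H⁻¹.mulVec c) :=
  krylov_minimizer_is_global_general H hH c x0 g0 hg0 r hr f hf xhat hxhatmin
end

section
/- Let x̂_k and x̂_{k+1} denote the minimizers of f(x)=(1/2)x^T H x + c^T x over x_0 + K_k(g_0,H) and x_0 + K_{k+1}(g_0,H) respectively, where g_0 = Hx_0 + c. Then the successive differences q̂_k = x̂_{k+1} - x̂_k are mutually conjugate with respect to H: q̂_i^T H q̂_j = 0 for i ≠ j. -/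
open Matrix

/-!
A minimizer `x̂` of the quadratic `f` over an affine subspace `x₀ + V` has its gradient
`H x̂ + c` orthogonal to `V`. For `i < j` both `x̂ⱼ` and `x̂ⱼ₊₁` minimize `f` over affine spaces
whose direction contains `Kⱼ`, so `H q̂ⱼ`, the difference of their gradients, is orthogonal to
`Kⱼ`, which contains `q̂ᵢ = x̂ᵢ₊₁ - x̂ᵢ`.
-/

theorem krylov_mono {n : ℕ} (b : Fin n → ℝ) (A : Matrix (Fin n) (Fin n) ℝ) :
    Monotone (krylov b A) := fun _ _ h =>
  Submodule.span_mono <| by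
    rintro _ ⟨i, rfl⟩
    exact ⟨i.castLE h, rfl⟩

theorem Matrix.IsSymm.dotProduct_mulVec_comm_s9 {m R : Type*} [Fintype m] [CommSemiring R]
    {H : Matrix m m R} (hH : H.IsSymm) (v w : m → R) : v ⬝ᵥ H *ᵥ w = w ⬝ᵥ H *ᵥ v := by
  simpa only [hH.eq] using dotProduct_transpose_mulVec H v w

section Quadratic

variable {m 𝕜 : Type*} [Fintype m] [Field 𝕜] [LinearOrder 𝕜] [IsStrictOrderedRing 𝕜]

def quadForm (H : Matrix m m 𝕜) (c x : m → 𝕜) : 𝕜 :=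
  1 / 2 * (x ⬝ᵥ H *ᵥ x) + c ⬝ᵥ x

theorem quadForm_add_smul {H : Matrix m m 𝕜} (hH : H.IsSymm) (c x v : m → 𝕜) (t : 𝕜) :
    quadForm H c (x + t • v) =
      quadForm H c x + t * ((H *ᵥ x + c) ⬝ᵥ v) + t ^ 2 / 2 * (v ⬝ᵥ H *ᵥ v) := by
  simp only [quadForm, mulVec_add, mulVec_smul, dotProduct_add, add_dotProduct, dotProduct_smul,
    smul_dotProduct, smul_eq_mul, dotProduct_comm (H *ᵥ x) v, hH.dotProduct_mulVec_comm_s9 x v]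
  ring

theorem gradient_dotProduct_eq_zero_of_minimizes {H : Matrix m m 𝕜} (hH : H.IsSymm)
    (c x₀ x : m → 𝕜) {V : Submodule 𝕜 (m → 𝕜)} (hx : x - x₀ ∈ V)
    (hmin : ∀ y, y - x₀ ∈ V → quadForm H c x ≤ quadForm H c y) {v : m → 𝕜} (hv : v ∈ V) :
    (H *ᵥ x + c) ⬝ᵥ v = 0 := by
  have hline : ∀ t : 𝕜, 0 ≤ (v ⬝ᵥ H *ᵥ v) / 2 * (t * t) + (H *ᵥ x + c) ⬝ᵥ v * t + 0 := by
    intro t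
    have hmem : x + t • v - x₀ ∈ V := by
      simpa only [add_sub_right_comm] using V.add_mem hx (V.smul_mem t hv)
    have := hmin _ hmem
    rw [quadForm_add_smul hH] at this
    linear_combination this
  have := discrim_le_zero hline
  rw [discrim, mul_zero, sub_zero] at this
  exact pow_eq_zero_iff two_ne_zero |>.mp (le_antisymm this (sq_nonneg _))

theorem minimizer_differences_conjugate {H : Matrix m m 𝕜} (hH : H.IsSymm) (c x₀ : m → 𝕜)
    {V : ℕ → Submodule 𝕜 (m → 𝕜)} (hV : Monotone V) {xhat : ℕ → m → 𝕜}
    (hmem : ∀ k, xhat k - x₀ ∈ V k)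
    (hmin : ∀ k y, y - x₀ ∈ V k → quadForm H c (xhat k) ≤ quadForm H c y) :
    Pairwise fun i j =>
      (xhat (i + 1) - xhat i) ⬝ᵥ H *ᵥ (xhat (j + 1) - xhat j) = 0 := by
  have of_lt : ∀ i j, i < j → (xhat (i + 1) - xhat i) ⬝ᵥ H *ᵥ (xhat (j + 1) - xhat j) = 0 := by
    intro i j hij
    have hq : xhat (i + 1) - xhat i ∈ V j := by
      simpa only [sub_sub_sub_cancel_right] using
        (V j).sub_mem (hV hij (hmem (i + 1))) (hV hij.le (hmem i))
    have grad_succ := gradient_dotProduct_eq_zero_of_minimizes hH c x₀ _ (hmem (j + 1))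
      (hmin (j + 1)) (hV j.le_succ hq)
    have grad := gradient_dotProduct_eq_zero_of_minimizes hH c x₀ _ (hmem j) (hmin j) hq
    rw [dotProduct_comm, mulVec_sub, ← add_sub_add_right_eq_sub _ _ c, sub_dotProduct, grad_succ,
      grad, sub_zero]
  intro i j hij
  rcases hij.lt_or_gt with h | h
  · exact of_lt i j h
  · rw [hH.dotProduct_mulVec_comm_s9]
    exact of_lt j i h

end Quadratic

theorem krylov_differences_conjugate_general {n : ℕ}
    (H : Matrix (Fin n) (Fin n) ℝ) (hH : H.PosDef)
    (c x0 : Fin n → ℝ) (g0 : Fin n → ℝ)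
    (f : (Fin n → ℝ) → ℝ)
    (hf : ∀ x, f x = (1 / 2) * (x ⬝ᵥ H.mulVec x) + c ⬝ᵥ x)
    (xhat : ℕ → (Fin n → ℝ))
    (hmem : ∀ k : ℕ, xhat k - x0 ∈ krylov g0 H k)
    (hmin : ∀ k : ℕ, ∀ y : Fin n → ℝ, y - x0 ∈ krylov g0 H k → f (xhat k) ≤ f y)
    (qhat : ℕ → (Fin n → ℝ)) (hqhat : ∀ k, qhat k = xhat (k + 1) - xhat k) :
    ∀ i j : ℕ, i ≠ j → qhat i ⬝ᵥ H.mulVec (qhat j) = 0 := by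
  obtain rfl : f = quadForm H c := funext hf
  obtain rfl : qhat = fun k => xhat (k + 1) - xhat k := funext hqhat
  exact minimizer_differences_conjugate (isHermitian_iff_isSymm.mp hH.isHermitian) c x0
    (krylov_mono g0 H) hmem hmin

theorem krylov_differences_conjugate {n : ℕ}
    (H : Matrix (Fin n) (Fin n) ℝ) (hH : H.PosDef)
    (c x0 : Fin n → ℝ) (g0 : Fin n → ℝ) (hg0 : g0 = H.mulVec x0 + c)
    (f : (Fin n → ℝ) → ℝ)
    (hf : ∀ x, f x = (1 / 2) * (x ⬝ᵥ H.mulVec x) + c ⬝ᵥ x)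
    (xhat : ℕ → (Fin n → ℝ))
    (hmem : ∀ k : ℕ, xhat k - x0 ∈ krylov g0 H k)
    (hmin : ∀ k : ℕ, ∀ y : Fin n → ℝ, y - x0 ∈ krylov g0 H k → f (xhat k) ≤ f y)
    (qhat : ℕ → (Fin n → ℝ)) (hqhat : ∀ k, qhat k = xhat (k + 1) - xhat k) :
    ∀ i j : ℕ, i ≠ j → qhat i ⬝ᵥ H.mulVec (qhat j) = 0 :=
  krylov_differences_conjugate_general H hH c x0 g0 f hf xhat hmem hmin qhat hqhat
end

section
/- Let ĝ_k be the gradient at the k-th Krylov minimizer x̂_k, assume ĝ_k ≠ 0, and let q_{k-1} be a nonzero multiple of q̂_{k-1} = x̂_k - x̂_{k-1}. Define β_k = -(ĝ_k^T ĝ_k · q_{k-1}^T H q_{k-1}) / D and γ_{k-1} = (ĝ_k^T ĝ_k · q_{k-1}^T H ĝ_k) / D, where D = ĝ_k^T H ĝ_k · q_{k-1}^T H q_{k-1} - (ĝ_k^T H q_{k-1})^2. Then β_k ĝ_k + γ_{k-1} q_{k-1} = x̂_{k+1} - x̂_k. -/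
/-!
The minimisers `x̂_j` are characterised by the Galerkin condition `g_j = H x̂_j + c ⊥ K_j`.
Since `ĝ_k ∉ K_k` and `q_{k-1} ∉ K_{k-1}` (exchange lemma), `K_{k+1} = K_{k-1} + span {q_{k-1}, ĝ_k}`.
The vectors `ĝ_k`, `H ĝ_k` and `H q_{k-1}` are orthogonal to `K_{k-1}`, so the gradient at
`x̂_k + β ĝ_k + γ q_{k-1}` is orthogonal to `K_{k-1}` for all `β, γ`; the given `β, γ` solve the
`2 × 2` system making it orthogonal to `ĝ_k` and `q_{k-1}` too (`D > 0` by strict Cauchy–Schwarz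
in the `H`-inner product). The Galerkin point of `x̂_k + K_{k+1}` is unique, hence equals `x̂_{k+1}`.
-/
open Matrix

open Submodule

theorem Submodule.sup_span_singleton_eq_of_mem_of_notMem {K V : Type*} [DivisionRing K]
    [AddCommGroup V] [Module K V] {p : Submodule K V} {u w : V}
    (hw : w ∈ p ⊔ K ∙ u) (hwp : w ∉ p) : p ⊔ K ∙ w = p ⊔ K ∙ u := by
  have hu : u ∈ p ⊔ K ∙ w := by
    have := mem_span_insert_exchange (K := K) (s := (p : Set V))
      (by rwa [span_insert, span_eq, sup_comm]) (by rwa [span_eq])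
    rwa [span_insert, span_eq, sup_comm] at this
  exact le_antisymm (sup_le le_sup_left ((span_singleton_le_iff_mem _ _).2 hw))
    (sup_le le_sup_left ((span_singleton_le_iff_mem _ _).2 hu))

section DotProduct

variable {ι : Type*} [Fintype ι]

theorem forall_dotProduct_eq_zero_sup_span_singleton {p : Submodule ℝ (ι → ℝ)} {u w : ι → ℝ}
    (hp : ∀ v ∈ p, w ⬝ᵥ v = 0) (hu : w ⬝ᵥ u = 0) : ∀ v ∈ p ⊔ ℝ ∙ u, w ⬝ᵥ v = 0 := by
  have : p ⊔ ℝ ∙ u ≤ LinearMap.ker (dotProductBilin ℝ ℝ w) :=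
    sup_le hp ((span_singleton_le_iff_mem _ _).2 hu)
  exact fun v hv => this hv

theorem notMem_of_forall_dotProduct_eq_zero {p : Submodule ℝ (ι → ℝ)} {w : ι → ℝ}
    (hp : ∀ v ∈ p, w ⬝ᵥ v = 0) (hw : w ≠ 0) : w ∉ p :=
  fun hwp => hw (dotProduct_self_eq_zero.1 (hp w hwp))

variable {H : Matrix ι ι ℝ}

theorem Matrix.IsHermitian.dotProduct_mulVec_comm (hH : H.IsHermitian) (x y : ι → ℝ) :
    x ⬝ᵥ H *ᵥ y = H *ᵥ x ⬝ᵥ y := by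
  rw [dotProduct_mulVec, ← mulVec_transpose, ← conjTranspose_eq_transpose_of_trivial, hH.eq,
    dotProduct_comm]

theorem Matrix.IsHermitian.add_smul_dotProduct_mulVec_add_smul (hH : H.IsHermitian)
    (x v : ι → ℝ) (t : ℝ) :
    (x + t • v) ⬝ᵥ H *ᵥ (x + t • v) =
      x ⬝ᵥ H *ᵥ x + 2 * t * (H *ᵥ x ⬝ᵥ v) + t ^ 2 * (v ⬝ᵥ H *ᵥ v) := by
  simp only [mulVec_add, mulVec_smul, dotProduct_add, add_dotProduct, dotProduct_smul,
    smul_dotProduct, smul_eq_mul, hH.dotProduct_mulVec_comm x v, dotProduct_comm v (H *ᵥ x)]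
  ring

theorem Matrix.IsHermitian.gradient_dotProduct_eq_zero_of_forall_le (hH : H.IsHermitian)
    {c x v : ι → ℝ} {f : (ι → ℝ) → ℝ} (hf : ∀ x, f x = (1 / 2) * (x ⬝ᵥ H *ᵥ x) + c ⬝ᵥ x)
    (hmin : ∀ t : ℝ, f x ≤ f (x + t • v)) : (H *ᵥ x + c) ⬝ᵥ v = 0 := by
  have hquad : ∀ t : ℝ, 0 ≤ (v ⬝ᵥ H *ᵥ v / 2) * (t * t) + (H *ᵥ x + c) ⬝ᵥ v * t + 0 := by
    intro t
    have := hmin t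
    rw [hf, hf, hH.add_smul_dotProduct_mulVec_add_smul, dotProduct_add, dotProduct_smul,
      smul_eq_mul] at this
    rw [add_dotProduct]
    linarith
  simpa [discrim] using discrim_le_zero hquad

theorem Matrix.PosDef.dotProduct_mulVec_self_pos (hH : H.PosDef) {x : ι → ℝ} (hx : x ≠ 0) :
    0 < x ⬝ᵥ H *ᵥ x := by
  simpa using hH.dotProduct_mulVec_pos hx

theorem Matrix.PosDef.eq_of_forall_gradient_dotProduct_eq_zero (hH : H.PosDef)
    {V : Submodule ℝ (ι → ℝ)} {c x y : ι → ℝ} (hxy : x - y ∈ V)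
    (hx : ∀ v ∈ V, (H *ᵥ x + c) ⬝ᵥ v = 0) (hy : ∀ v ∈ V, (H *ᵥ y + c) ⬝ᵥ v = 0) : x = y := by
  by_contra hne
  have hzero : (x - y) ⬝ᵥ H *ᵥ (x - y) = 0 := by
    rw [hH.1.dotProduct_mulVec_comm, show H *ᵥ (x - y) = (H *ᵥ x + c) - (H *ᵥ y + c) by
      rw [mulVec_sub]; abel, sub_dotProduct, hx _ hxy, hy _ hxy, sub_zero]
  exact (hH.dotProduct_mulVec_self_pos (sub_ne_zero.2 hne)).ne' hzero

/-- Strict Cauchy–Schwarz for the inner product `⟪x, y⟫ = x ⬝ᵥ H *ᵥ y`. -/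
theorem Matrix.PosDef.sq_dotProduct_mulVec_lt (hH : H.PosDef) {g q : ι → ℝ} (hq : q ≠ 0)
    (hg : g ∉ ℝ ∙ q) : (g ⬝ᵥ H *ᵥ q) ^ 2 < (g ⬝ᵥ H *ᵥ g) * (q ⬝ᵥ H *ᵥ q) := by
  have hpos : ∀ t : ℝ,
      0 < (q ⬝ᵥ H *ᵥ q) * (t * t) + 2 * (g ⬝ᵥ H *ᵥ q) * t + g ⬝ᵥ H *ᵥ g := by
    intro t
    have hne : g + t • q ≠ 0 := fun h =>
      hg (eq_neg_of_add_eq_zero_left h ▸ neg_mem (smul_mem _ _ (mem_span_singleton_self q)))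
    have := hH.dotProduct_mulVec_self_pos hne
    rw [hH.1.add_smul_dotProduct_mulVec_add_smul, ← hH.1.dotProduct_mulVec_comm] at this
    linarith
  have := discrim_lt_zero (hH.dotProduct_mulVec_self_pos hq).ne' hpos
  rw [discrim] at this
  linarith

/-- `β • g + γ • q` is the Newton step for `p ↦ g ⬝ᵥ p + (1/2) p ⬝ᵥ H *ᵥ p` on `span {g, q}`:
Cramer's rule for the `2 × 2` system `⟪g + H p, g⟫ = ⟪g + H p, q⟫ = 0`. -/
theorem Matrix.IsHermitian.newtonStep_dotProduct_eq_zero (hH : H.IsHermitian) {g q : ι → ℝ}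
    {D β γ : ℝ} (hgq : g ⬝ᵥ q = 0) (hD0 : D ≠ 0)
    (hD : D = (g ⬝ᵥ H *ᵥ g) * (q ⬝ᵥ H *ᵥ q) - (g ⬝ᵥ H *ᵥ q) ^ 2)
    (hβ : β = -((g ⬝ᵥ g) * (q ⬝ᵥ H *ᵥ q)) / D)
    (hγ : γ = ((g ⬝ᵥ g) * (q ⬝ᵥ H *ᵥ g)) / D) :
    (g + H *ᵥ (β • g + γ • q)) ⬝ᵥ g = 0 ∧ (g + H *ᵥ (β • g + γ • q)) ⬝ᵥ q = 0 := by
  simp only [mulVec_add, mulVec_smul, add_dotProduct, smul_dotProduct, smul_eq_mul, hgq,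
    ← hH.dotProduct_mulVec_comm, dotProduct_comm q (H *ᵥ g)]
  have hsymm : q ⬝ᵥ H *ᵥ g = g ⬝ᵥ H *ᵥ q := by
    rw [hH.dotProduct_mulVec_comm, dotProduct_comm]
  rw [hsymm] at hγ
  subst hβ hγ
  constructor
  · field_simp
    linear_combination (g ⬝ᵥ g) * hD
  · field_simp
    ring

end DotProduct

section Krylov

variable {n : ℕ} {b : Fin n → ℝ} {A : Matrix (Fin n) (Fin n) ℝ} {j : ℕ}

theorem krylov_succ : krylov b A (j + 1) = krylov b A j ⊔ ℝ ∙ (A ^ j) *ᵥ b := by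
  have hrange : (Set.range fun i : Fin (j + 1) => (A ^ (i : ℕ)) *ᵥ b) =
      insert ((A ^ j) *ᵥ b) (Set.range fun i : Fin j => (A ^ (i : ℕ)) *ᵥ b) := by
    ext v
    simp [Fin.exists_fin_succ', or_comm, eq_comm]
  rw [krylov, krylov, hrange, span_insert, sup_comm]

theorem krylov_mono_s12 {l : ℕ} (h : j ≤ l) : krylov b A j ≤ krylov b A l :=
  span_mono fun _ ⟨i, hi⟩ => ⟨Fin.castLE h i, hi⟩

theorem self_mem_krylov_succ : b ∈ krylov b A (j + 1) :=
  subset_span ⟨0, by simp⟩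

theorem mulVec_mem_krylov_succ {v : Fin n → ℝ} (hv : v ∈ krylov b A j) :
    A *ᵥ v ∈ krylov b A (j + 1) := by
  have : krylov b A j ≤ (krylov b A (j + 1)).comap A.mulVecLin :=
    span_le.2 fun _ ⟨i, hi⟩ => by
      rw [← hi, SetLike.mem_coe, mem_comap, mulVecLin_apply, mulVec_mulVec, ← pow_succ']
      exact subset_span ⟨i.succ, rfl⟩
  exact this hv

theorem Matrix.IsHermitian.mulVec_dotProduct_krylov_eq_zero (hA : A.IsHermitian) {w : Fin n → ℝ}
    (hw : ∀ v ∈ krylov b A (j + 1), w ⬝ᵥ v = 0) : ∀ v ∈ krylov b A j, A *ᵥ w ⬝ᵥ v = 0 :=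
  fun v hv => by rw [← hA.dotProduct_mulVec_comm]; exact hw _ (mulVec_mem_krylov_succ hv)

end Krylov

/-- The Galerkin conditions characterising the minimisers `x j` of
`x ↦ (1/2) x ⬝ᵥ H *ᵥ x + c ⬝ᵥ x` over the affine Krylov spaces `x0 + K_j(g0, H)`. -/
structure IsKrylovGalerkinSeq {n : ℕ} (H : Matrix (Fin n) (Fin n) ℝ) (c x0 : Fin n → ℝ)
    (x : ℕ → Fin n → ℝ) : Prop where
  sub_mem_krylov : ∀ j, x j - x0 ∈ krylov (H *ᵥ x0 + c) H j
  gradient_orthogonal : ∀ j, ∀ v ∈ krylov (H *ᵥ x0 + c) H j, (H *ᵥ x j + c) ⬝ᵥ v = 0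

namespace IsKrylovGalerkinSeq

variable {n : ℕ} {H : Matrix (Fin n) (Fin n) ℝ} {c x0 : Fin n → ℝ} {x : ℕ → Fin n → ℝ} {j : ℕ}

theorem of_isMin (hH : H.IsHermitian) {f : (Fin n → ℝ) → ℝ}
    (hf : ∀ x, f x = (1 / 2) * (x ⬝ᵥ H *ᵥ x) + c ⬝ᵥ x)
    (hmem : ∀ j, x j - x0 ∈ krylov (H *ᵥ x0 + c) H j)
    (hmin : ∀ j, ∀ y, y - x0 ∈ krylov (H *ᵥ x0 + c) H j → f (x j) ≤ f y) :
    IsKrylovGalerkinSeq H c x0 x where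
  sub_mem_krylov := hmem
  gradient_orthogonal j v hv := hH.gradient_dotProduct_eq_zero_of_forall_le hf fun t =>
    hmin j _ (by rw [add_sub_right_comm]; exact add_mem (hmem j) (smul_mem _ t hv))

theorem gradient_mem_krylov_succ (hx : IsKrylovGalerkinSeq H c x0 x) (j : ℕ) :
    H *ᵥ x j + c ∈ krylov (H *ᵥ x0 + c) H (j + 1) := by
  have hsplit : H *ᵥ x j + c = H *ᵥ (x j - x0) + (H *ᵥ x0 + c) := by rw [mulVec_sub]; abel
  rw [hsplit]
  exact add_mem (mulVec_mem_krylov_succ (hx.sub_mem_krylov j)) self_mem_krylov_succ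

theorem sub_mem_krylov_succ (hx : IsKrylovGalerkinSeq H c x0 x) (j : ℕ) :
    x (j + 1) - x j ∈ krylov (H *ᵥ x0 + c) H (j + 1) := by
  rw [← sub_sub_sub_cancel_right _ _ x0]
  exact sub_mem (hx.sub_mem_krylov (j + 1)) (krylov_mono_s12 j.le_succ (hx.sub_mem_krylov j))

theorem eq_sub_of_gradient_orthogonal (hx : IsKrylovGalerkinSeq H c x0 x) (hH : H.PosDef)
    {p : Fin n → ℝ} (hp : p ∈ krylov (H *ᵥ x0 + c) H (j + 1))
    (hp_orth : ∀ v ∈ krylov (H *ᵥ x0 + c) H (j + 1), (H *ᵥ (x j + p) + c) ⬝ᵥ v = 0) :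
    p = x (j + 1) - x j := by
  have hmem : x j + p - x (j + 1) ∈ krylov (H *ᵥ x0 + c) H (j + 1) := by
    rw [add_sub_right_comm, ← neg_sub]
    exact add_mem (neg_mem (hx.sub_mem_krylov_succ j)) hp
  rw [← hH.eq_of_forall_gradient_dotProduct_eq_zero hmem hp_orth (hx.gradient_orthogonal _),
    add_sub_cancel_left]

theorem krylov_succ_eq_sup_gradient (hx : IsKrylovGalerkinSeq H c x0 x)
    (hg : H *ᵥ x j + c ≠ 0) :
    krylov (H *ᵥ x0 + c) H (j + 1) = krylov (H *ᵥ x0 + c) H j ⊔ ℝ ∙ (H *ᵥ x j + c) := by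
  have hmem := hx.gradient_mem_krylov_succ j
  rw [krylov_succ] at hmem ⊢
  exact (sup_span_singleton_eq_of_mem_of_notMem hmem
    (notMem_of_forall_dotProduct_eq_zero (hx.gradient_orthogonal j) hg)).symm

theorem sub_notMem_krylov (hx : IsKrylovGalerkinSeq H c x0 x) (hH : H.PosDef)
    (hg : H *ᵥ x (j + 1) + c ≠ 0) : x (j + 1) - x j ∉ krylov (H *ᵥ x0 + c) H j := by
  intro hmem
  have hstall : x (j + 1) = x j := hH.eq_of_forall_gradient_dotProduct_eq_zero hmem
    (fun v hv => hx.gradient_orthogonal (j + 1) v (krylov_mono_s12 j.le_succ hv))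
    (hx.gradient_orthogonal j)
  exact notMem_of_forall_dotProduct_eq_zero (hx.gradient_orthogonal (j + 1)) hg
    (hstall ▸ hx.gradient_mem_krylov_succ j)

theorem krylov_succ_eq_sup_sub (hx : IsKrylovGalerkinSeq H c x0 x) (hH : H.PosDef)
    (hg : H *ᵥ x (j + 1) + c ≠ 0) :
    krylov (H *ᵥ x0 + c) H (j + 1) = krylov (H *ᵥ x0 + c) H j ⊔ ℝ ∙ (x (j + 1) - x j) := by
  have hmem := hx.sub_mem_krylov_succ j
  rw [krylov_succ] at hmem ⊢
  exact (sup_span_singleton_eq_of_mem_of_notMem hmem (hx.sub_notMem_krylov hH hg)).symm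

/-- `g_{j+1}`, `H g_{j+1}` and `H (x (j+1) - x j) = g_{j+1} - g_j` are all orthogonal to `K_j`. -/
theorem gradient_add_dotProduct_eq_zero (hx : IsKrylovGalerkinSeq H c x0 x) (hH : H.IsHermitian)
    (β γ : ℝ) : ∀ v ∈ krylov (H *ᵥ x0 + c) H j,
      (H *ᵥ (x (j + 1) + (β • (H *ᵥ x (j + 1) + c) + γ • (x (j + 1) - x j))) + c) ⬝ᵥ v = 0 := by
  intro v hv
  have hdiff : H *ᵥ (x (j + 1) - x j) = (H *ᵥ x (j + 1) + c) - (H *ᵥ x j + c) := by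
    rw [mulVec_sub]; abel
  have hg : (H *ᵥ x (j + 1) + c) ⬝ᵥ v = 0 :=
    hx.gradient_orthogonal (j + 1) v (krylov_mono_s12 j.le_succ hv)
  have hHg := hH.mulVec_dotProduct_krylov_eq_zero (hx.gradient_orthogonal (j + 1)) v hv
  have hgrad : H *ᵥ (x (j + 1) + (β • (H *ᵥ x (j + 1) + c) + γ • (x (j + 1) - x j))) + c =
      (H *ᵥ x (j + 1) + c) + β • H *ᵥ (H *ᵥ x (j + 1) + c) +
        γ • ((H *ᵥ x (j + 1) + c) - (H *ᵥ x j + c)) := by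
    rw [mulVec_add, mulVec_add, mulVec_smul, mulVec_smul, hdiff]; abel
  rw [hgrad, add_dotProduct, add_dotProduct, smul_dotProduct, smul_dotProduct, sub_dotProduct, hg,
    hHg, hx.gradient_orthogonal j v hv]
  simp

end IsKrylovGalerkinSeq

theorem subspace_newton_step_extension {n : ℕ}
    (H : Matrix (Fin n) (Fin n) ℝ) (hH : H.PosDef)
    (c x0 : Fin n → ℝ) (g0 : Fin n → ℝ) (hg0 : g0 = H.mulVec x0 + c)
    (f : (Fin n → ℝ) → ℝ)
    (hf : ∀ x, f x = (1 / 2) * (x ⬝ᵥ H.mulVec x) + c ⬝ᵥ x)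
    (xhat : ℕ → (Fin n → ℝ))
    (hmem : ∀ j : ℕ, xhat j - x0 ∈ krylov g0 H j)
    (hmin : ∀ j : ℕ, ∀ y : Fin n → ℝ, y - x0 ∈ krylov g0 H j → f (xhat j) ≤ f y)
    (k : ℕ) (hk : 1 ≤ k)
    (ghat : Fin n → ℝ) (hghat : ghat = H.mulVec (xhat k) + c) (hgne : ghat ≠ 0)
    (q : Fin n → ℝ) (lam : ℝ) (hlam : lam ≠ 0)
    (hq : q = lam • (xhat k - xhat (k - 1)))
    (D β γ : ℝ)
    (hD : D = (ghat ⬝ᵥ H.mulVec ghat) * (q ⬝ᵥ H.mulVec q) - (ghat ⬝ᵥ H.mulVec q) ^ 2)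
    (hβ : β = -((ghat ⬝ᵥ ghat) * (q ⬝ᵥ H.mulVec q)) / D)
    (hγ : γ = ((ghat ⬝ᵥ ghat) * (q ⬝ᵥ H.mulVec ghat)) / D) :
    β • ghat + γ • q = xhat (k + 1) - xhat k := by
  subst hg0
  have hx := IsKrylovGalerkinSeq.of_isMin hH.1 hf hmem hmin
  obtain ⟨m, rfl⟩ : ∃ m, k = m + 1 := ⟨k - 1, by omega⟩
  rw [Nat.add_sub_cancel] at hq
  subst hghat
  have hKq : krylov (H *ᵥ x0 + c) H (m + 1) = krylov (H *ᵥ x0 + c) H m ⊔ ℝ ∙ q := by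
    rw [hq, span_singleton_smul_eq hlam.isUnit, hx.krylov_succ_eq_sup_sub hH hgne]
  have hqK : q ∈ krylov (H *ᵥ x0 + c) H (m + 1) := hKq ▸ mem_sup_right (mem_span_singleton_self q)
  have hq0 : q ≠ 0 := hq ▸ smul_ne_zero hlam
    fun h => hx.sub_notMem_krylov hH hgne (h ▸ zero_mem _)
  have hgq : H *ᵥ xhat (m + 1) + c ∉ ℝ ∙ q := fun h =>
    notMem_of_forall_dotProduct_eq_zero (hx.gradient_orthogonal _) hgne (hKq ▸ mem_sup_right h)
  have hD0 : D ≠ 0 := hD ▸ (sub_pos.2 (hH.sq_dotProduct_mulVec_lt hq0 hgq)).ne'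
  obtain ⟨hwg, hwq⟩ :=
    hH.1.newtonStep_dotProduct_eq_zero (hx.gradient_orthogonal _ q hqK) hD0 hD hβ hγ
  have hgrad : H *ᵥ (xhat (m + 1) + (β • (H *ᵥ xhat (m + 1) + c) + γ • q)) + c =
      (H *ᵥ xhat (m + 1) + c) + H *ᵥ (β • (H *ᵥ xhat (m + 1) + c) + γ • q) := by
    rw [mulVec_add]; abel
  refine hx.eq_sub_of_gradient_orthogonal hH (add_mem (smul_mem _ _ (hx.gradient_mem_krylov_succ _))
    (smul_mem _ _ (krylov_mono_s12 (m + 1).le_succ hqK))) ?_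
  rw [hx.krylov_succ_eq_sup_gradient hgne, hKq, hgrad]
  refine forall_dotProduct_eq_zero_sup_span_singleton
    (forall_dotProduct_eq_zero_sup_span_singleton ?_ hwq) hwg
  have := hx.gradient_add_dotProduct_eq_zero hH.1 β (γ * lam) (j := m)
  rwa [mul_smul, ← hq, hgrad] at this
end

section
/- Let Q be an n×k real matrix of full column rank, H symmetric positive definite, and σ > 0. Then the matrix B = σ(I - Q(Q^T Q)^{-1}Q^T) + H Q (Q^T H Q)^{-1} Q^T H is symmetric positive definite. -/
/-!
`B` is the sum of two positive semidefinite matrices: `σ (1 - P)`, where `P` is the orthogonal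
projection onto the column space of `Q`, and `(Qᵀ H)ᵀ (Qᵀ H Q)⁻¹ (Qᵀ H)`. A vector in both kernels
lies in the column space of `Q`, say `x = Q c`, and there the second summand acts as
`H Q (Qᵀ H Q)⁻¹ (Qᵀ H Q) c = H x`, which vanishes only for `x = 0`.
-/

open Matrix

open scoped ComplexOrder

namespace Matrix

variable {𝕜 m n : Type*} [RCLike 𝕜] [Fintype m] [Fintype n] [DecidableEq m]

lemma PosSemidef.posDef_add_of_mulVec_eq_zero {A C : Matrix n n 𝕜} (hA : A.PosSemidef)
    (hC : C.PosSemidef) (h : ∀ x, A *ᵥ x = 0 → C *ᵥ x = 0 → x = 0) : (A + C).PosDef := by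
  refine .of_dotProduct_mulVec_pos (hA.isHermitian.add hC.isHermitian) fun x hx => ?_
  have hAx := hA.dotProduct_mulVec_nonneg x
  have hCx := hC.dotProduct_mulVec_nonneg x
  rw [add_mulVec, dotProduct_add]
  refine (add_nonneg hAx hCx).lt_of_ne fun h0 => hx ?_
  obtain ⟨hA0, hC0⟩ := (add_eq_zero_iff_of_nonneg hAx hCx).1 h0.symm
  exact h x ((hA.dotProduct_mulVec_zero_iff x).1 hA0) ((hC.dotProduct_mulVec_zero_iff x).1 hC0)

/-- The orthogonal projection onto the column space of `Q` when `Q` has full column rank, and `0`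
otherwise (junk value of `⁻¹`). -/
noncomputable def colSpaceProj (Q : Matrix n m 𝕜) : Matrix n n 𝕜 := Q * (Qᴴ * Q)⁻¹ * Qᴴ

lemma colSpaceProj_mul_self {Q : Matrix n m 𝕜} (hQ : IsUnit (Qᴴ * Q).det) :
    colSpaceProj Q * colSpaceProj Q = colSpaceProj Q := by
  calc colSpaceProj Q * colSpaceProj Q = Q * (Qᴴ * Q)⁻¹ * (Qᴴ * Q) * (Qᴴ * Q)⁻¹ * Qᴴ := by
        simp only [colSpaceProj, Matrix.mul_assoc]
    _ = colSpaceProj Q := by rw [nonsing_inv_mul_cancel_right _ _ hQ, colSpaceProj]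

lemma isHermitian_colSpaceProj (Q : Matrix n m 𝕜) : (colSpaceProj Q).IsHermitian :=
  isHermitian_mul_mul_conjTranspose Q (isHermitian_conjTranspose_mul_self Q).inv

lemma posSemidef_one_sub_colSpaceProj [DecidableEq n] (Q : Matrix n m 𝕜) :
    (1 - colSpaceProj Q).PosSemidef := by
  by_cases hQ : IsUnit (Qᴴ * Q).det
  · have hP := isHermitian_colSpaceProj Q
    have hidem : (1 - colSpaceProj Q)ᴴ * (1 - colSpaceProj Q) = 1 - colSpaceProj Q := by
      rw [conjTranspose_sub, conjTranspose_one, hP.eq, sub_mul, mul_sub, mul_sub,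
        colSpaceProj_mul_self hQ, mul_one, one_mul, mul_one]
      abel
    exact hidem ▸ posSemidef_conjTranspose_mul_self (1 - colSpaceProj Q)
  · simpa [colSpaceProj, nonsing_inv_apply_not_isUnit _ hQ] using PosSemidef.one

lemma PosSemidef.mul_mul_inv_conjTranspose_mul_mul {H : Matrix n n 𝕜} (hH : H.PosSemidef)
    (Q : Matrix n m 𝕜) : (H * Q * (Qᴴ * H * Q)⁻¹ * Qᴴ * H).PosSemidef := by
  simpa [conjTranspose_mul, hH.isHermitian.eq, Matrix.mul_assoc] using
    (hH.conjTranspose_mul_mul_same Q).inv.conjTranspose_mul_mul_same (Qᴴ * H)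

lemma posDef_smul_one_sub_colSpaceProj_add [DecidableEq n] {H : Matrix n n 𝕜} (hH : H.PosDef)
    {Q : Matrix n m 𝕜} (hQ : Function.Injective Q.mulVec) {σ : 𝕜} (hσ : 0 < σ) :
    (σ • (1 - colSpaceProj Q) + H * Q * (Qᴴ * H * Q)⁻¹ * Qᴴ * H).PosDef := by
  have hM : IsUnit (Qᴴ * H * Q).det :=
    (isUnit_iff_isUnit_det _).1 (hH.conjTranspose_mul_mul_same hQ).isUnit
  refine ((posSemidef_one_sub_colSpaceProj Q).smul hσ.le).posDef_add_of_mulVec_eq_zero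
    (hH.posSemidef.mul_mul_inv_conjTranspose_mul_mul Q) fun x hPx hCx => ?_
  have hx : x = Q *ᵥ ((Qᴴ * Q)⁻¹ *ᵥ (Qᴴ *ᵥ x)) := by
    rw [smul_mulVec, smul_eq_zero_iff_right hσ.ne', sub_mulVec, one_mulVec, sub_eq_zero] at hPx
    rwa [mulVec_mulVec, mulVec_mulVec, ← colSpaceProj]
  have hHQ : H * Q * (Qᴴ * H * Q)⁻¹ * Qᴴ * H * Q = H * Q := by
    simpa only [Matrix.mul_assoc] using nonsing_inv_mul_cancel_right _ (H * Q) hM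
  rw [hx, mulVec_mulVec, hHQ, ← mulVec_mulVec, ← hx] at hCx
  exact mulVec_injective_of_isUnit hH.isUnit (hCx.trans (mulVec_zero H).symm)

end Matrix

theorem B_posDef {n k : ℕ}
    (H : Matrix (Fin n) (Fin n) ℝ) (hH : H.PosDef)
    (Q : Matrix (Fin n) (Fin k) ℝ)
    (hQ : LinearIndependent ℝ (fun j : Fin k => Qᵀ j))
    (σ : ℝ) (hσ : 0 < σ)
    (B : Matrix (Fin n) (Fin n) ℝ)
    (hB : B = σ • (1 - Q * (Qᵀ * Q)⁻¹ * Qᵀ) + H * Q * (Qᵀ * H * Q)⁻¹ * Qᵀ * H) :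
    B.PosDef := by
  simp only [← conjTranspose_eq_transpose_of_trivial] at hB
  subst hB
  exact posDef_smul_one_sub_colSpaceProj_add hH (mulVec_injective_iff.2 hQ) hσ
end
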